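/- Under separability of X w.r.t. C*, hierarchical agglomerative clustering with average linkage recovers C*: whenever more than K subsets remain, the pair minimizing average linkage lies within a single ground-truth cluster, so the partition at K subsets equals C*. -/

import Mathlib

open scoped Classical

inductive CTree (α : Type*) where
  | leaf (x : α) : CTree α
  | node (l r : CTree α) : CTree α

namespace CTree

variable {α : Type*}

/-- The set of data points (descendant leaves) of a node. -/
noncomputable def lvs : CTree α → Finset α
  | leaf x => {x}
  | node l r => lvs l ∪ lvs r

theorem lvs_nonempty (t : CTree α) : t.lvs.Nonempty := by
  induction t with
  | leaf x => exact ⟨x, by simp [lvs]⟩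
  | node l r ihl ihr => exact ihl.mono (by simp [lvs])

/-- `Sub s t` : `s` is a subtree (node) of `t`. -/
inductive Sub : CTree α → CTree α → Prop
  | refl (t : CTree α) : Sub t t
  | left {s l r : CTree α} : Sub s l → Sub s (node l r)
  | right {s l r : CTree α} : Sub s r → Sub s (node l r)

/-- Least common ancestor (as a subtree) of two data points. -/
noncomputable def lca : CTree α → α → α → CTree α
  | leaf a, _, _ => leaf a
  | node l r, x, y =>
      if x ∈ lvs l ∧ y ∈ lvs l then lca l x y
      else if x ∈ lvs r ∧ y ∈ lvs r then lca r x y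
      else node l r

/-- Dendrogram purity 1: for every same-cluster pair, all leaves below their
least common ancestor belong to that cluster. -/
def PurityOne (C : α → ℕ) (t : CTree α) : Prop :=
  ∀ x ∈ t.lvs, ∀ y ∈ t.lvs, x ≠ y → C x = C y → ∀ z ∈ (t.lca x y).lvs, C z = C x

/-- A dataset `X` is separable w.r.t. a ground-truth clustering `C`:
every within-cluster distance is strictly smaller than every between-cluster distance. -/
def Separable [MetricSpace α] (X : Finset α) (C : α → ℕ) : Prop :=
  ∀ x ∈ X, ∀ y ∈ X, ∀ x' ∈ X, ∀ y' ∈ X,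
    x ≠ y → C x = C y → C x' ≠ C y' → dist x y < dist x' y'

/-- A node `v` with sibling `v'` and aunt `a` is masked if some `x ∈ lvs v` is farther
from some point of `v'` than from some point of `a`
(i.e. `max_{y ∈ lvs v'} ‖x-y‖ > min_{z ∈ lvs a} ‖x-z‖`). -/
def Masked [MetricSpace α] (v v' a : CTree α) : Prop :=
  ∃ x ∈ v.lvs,
    (a.lvs.inf' (lvs_nonempty a) fun z => dist x z) <
      (v'.lvs.sup' (lvs_nonempty v') fun y => dist x y)

end CTree

abbrev Euc (d : ℕ) := EuclideanSpace ℝ (Fin d)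

/-- One merge step of hierarchical agglomerative clustering with linkage `link`:
two distinct current subsets minimizing the linkage over all current pairs are merged. -/
inductive HACStep {α : Type*} (link : Finset α → Finset α → ℝ) :
    Finset (Finset α) → Finset (Finset α) → Prop
  | merge (P : Finset (Finset α)) (A B : Finset α)
      (hA : A ∈ P) (hB : B ∈ P) (hne : A ≠ B)
      (hmin : ∀ A' ∈ P, ∀ B' ∈ P, A' ≠ B' → link A B ≤ link A' B') :
      HACStep link P (insert (A ∪ B) ((P.erase A).erase B))

/-- Single linkage: minimum pairwise distance between the two subsets. -/
noncomputable def singleLink {α : Type*} [MetricSpace α] (A B : Finset α) : ℝ :=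
  sInf (Set.image2 dist (↑A : Set α) (↑B : Set α))

/-- Complete linkage: maximum pairwise distance between the two subsets. -/
noncomputable def completeLink {α : Type*} [MetricSpace α] (A B : Finset α) : ℝ :=
  sSup (Set.image2 dist (↑A : Set α) (↑B : Set α))

/-- Average linkage: average pairwise distance between the two subsets. -/
noncomputable def averageLink {α : Type*} [MetricSpace α] (A B : Finset α) : ℝ :=
  (∑ a ∈ A, ∑ b ∈ B, dist a b) / ((A.card : ℝ) * (B.card : ℝ))

/-!
Average-linkage HAC keeps the current subsets a cover of `X` by nonempty parts, and each merge
lowers their number. While more than `K` parts remain and all of them are cluster-pure, two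
distinct parts carry the same cluster label `A.image C` (pigeonhole), and separability puts their
average linkage strictly below that of any two parts from different clusters; hence the
minimizing pair lies in one cluster and the merged part is pure again. With exactly `K` pure
parts the labels are a bijection onto the clusters, so every part is a whole cluster.
-/

namespace CTree.Separable

variable {α : Type*} [MetricSpace α] {X : Finset α} {C : α → ℕ}

lemma dist_lt (hsep : Separable X C) {x y x' y' : α} (hx : x ∈ X) (hy : y ∈ X)
    (hx' : x' ∈ X) (hy' : y' ∈ X) (hxy : C x = C y) (hxy' : C x' ≠ C y') :
    dist x y < dist x' y' := by
  rcases eq_or_ne x y with rfl | hne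
  · exact dist_self x ▸ dist_pos.2 fun h => hxy' (congrArg C h)
  · exact hsep x hx y hy x' hx' y' hy' hne hxy hxy'

end CTree.Separable

section AverageLinkage

open Finset
open scoped BigOperators

variable {α : Type*} [MetricSpace α]

lemma averageLink_eq_expect (A B : Finset α) :
    averageLink A B = 𝔼 p ∈ A ×ˢ B, dist p.1 p.2 := by
  rw [averageLink, expect_eq_sum_div_card, sum_product, card_product, Nat.cast_mul]

lemma averageLink_lt_averageLink_of_forall_dist_lt {A B A' B' : Finset α}
    (hA : A.Nonempty) (hB : B.Nonempty) (hA' : A'.Nonempty) (hB' : B'.Nonempty)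
    (h : ∀ a ∈ A, ∀ b ∈ B, ∀ a' ∈ A', ∀ b' ∈ B', dist a b < dist a' b') :
    averageLink A B < averageLink A' B' := by
  rw [averageLink_eq_expect, averageLink_eq_expect]
  obtain ⟨p', hp', hp'_le⟩ :=
    exists_le_of_expect_le (f := fun p : α × α => dist p.1 p.2) (hA'.product hB') le_rfl
  obtain ⟨a', b'⟩ := p'
  rw [mem_product] at hp'
  refine lt_of_lt_of_le (expect_lt (fun p hp => ?_) ?_) hp'_le
  · rw [mem_product] at hp
    exact (h _ hp.1 _ hp.2 _ hp'.1 _ hp'.2).le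
  · obtain ⟨a, ha⟩ := hA
    obtain ⟨b, hb⟩ := hB
    exact ⟨(a, b), mem_product.2 ⟨ha, hb⟩, h a ha b hb a' hp'.1 b' hp'.2⟩

end AverageLinkage

section HierarchicalClustering

open Finset

variable {α : Type*}

structure IsCover (X : Finset α) (P : Finset (Finset α)) : Prop where
  subset : ∀ A ∈ P, A ⊆ X
  nonempty : ∀ A ∈ P, A.Nonempty
  exists_mem : ∀ x ∈ X, ∃ A ∈ P, x ∈ A

def IsPure (C : α → ℕ) (A : Finset α) : Prop :=
  ∀ a ∈ A, ∀ b ∈ A, C a = C b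

variable {X A B : Finset α} {P Q : Finset (Finset α)} {C : α → ℕ}

lemma IsPure.image_eq_singleton (hA : IsPure C A) {a : α} (ha : a ∈ A) : A.image C = {C a} :=
  eq_singleton_iff_unique_mem.2
    ⟨mem_image_of_mem C ha, by simpa only [forall_mem_image] using fun b hb => hA b hb a ha⟩

lemma IsPure.union (hA : IsPure C A) (hB : IsPure C B) (hAB : ∀ a ∈ A, ∀ b ∈ B, C a = C b) :
    IsPure C (A ∪ B) := by
  intro a ha b hb
  rcases mem_union.1 ha with ha | ha <;> rcases mem_union.1 hb with hb | hb
  · exact hA a ha b hb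
  · exact hAB a ha b hb
  · exact (hAB b hb a ha).symm
  · exact hB a ha b hb

lemma isCover_image_singleton [DecidableEq α] (X : Finset α) :
    IsCover X (X.image singleton) where
  subset := by simp
  nonempty := by simp
  exists_mem x hx := ⟨{x}, mem_image_of_mem _ hx, mem_singleton_self x⟩

lemma isPure_of_mem_image_singleton [DecidableEq α] (hA : A ∈ X.image singleton) :
    IsPure C A := by
  obtain ⟨x, -, rfl⟩ := mem_image.1 hA
  simp [IsPure]

namespace IsCover

lemma image_mem_image_singleton (hP : IsCover X P) (hpure : ∀ A ∈ P, IsPure C A)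
    (hA : A ∈ P) : A.image C ∈ (X.image C).image singleton := by
  obtain ⟨a, ha⟩ := hP.nonempty A hA
  rw [(hpure A hA).image_eq_singleton ha]
  exact mem_image_of_mem _ (mem_image_of_mem C (hP.subset A hA ha))

lemma exists_ne_image_eq (hP : IsCover X P) (hpure : ∀ A ∈ P, IsPure C A)
    (hK : #(X.image C) < #P) : ∃ A ∈ P, ∃ B ∈ P, A ≠ B ∧ A.image C = B.image C :=
  exists_ne_map_eq_of_card_lt_of_maps_to (card_image_le.trans_lt hK) fun _ =>
    hP.image_mem_image_singleton hpure

lemma eq_image_filter [DecidableEq α] (hP : IsCover X P) (hpure : ∀ A ∈ P, IsPure C A)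
    (hK : #P = #(X.image C)) : P = X.image fun x => X.filter fun y => C y = C x := by
  have hlabels : P.image (·.image C) = (X.image C).image singleton := by
    refine Subset.antisymm (fun c hc => ?_) (fun c hc => ?_)
    · obtain ⟨A, hA, rfl⟩ := mem_image.1 hc
      exact hP.image_mem_image_singleton hpure hA
    · obtain ⟨c, hcX, rfl⟩ := mem_image.1 hc
      obtain ⟨x, hx, rfl⟩ := mem_image.1 hcX
      obtain ⟨A, hA, hxA⟩ := hP.exists_mem x hx
      exact mem_image.2 ⟨A, hA, (hpure A hA).image_eq_singleton hxA⟩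
  have hinj : Set.InjOn (fun A : Finset α => A.image C) ↑P := by
    rw [← card_image_iff, hlabels, card_image_of_injective _ singleton_injective, hK]
  have hpart : ∀ A ∈ P, ∀ a ∈ A, A = X.filter fun y => C y = C a := by
    intro A hA a ha
    ext y
    rw [mem_filter]
    refine ⟨fun hy => ⟨hP.subset A hA hy, hpure A hA y hy a ha⟩, fun ⟨hyX, hya⟩ => ?_⟩
    obtain ⟨B, hB, hyB⟩ := hP.exists_mem y hyX
    have hBA : B = A := hinj hB hA <| by
      simp only [(hpure A hA).image_eq_singleton ha, (hpure B hB).image_eq_singleton hyB, hya]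
    exact hBA ▸ hyB
  ext A
  refine ⟨fun hA => ?_, fun hA => ?_⟩
  · obtain ⟨a, ha⟩ := hP.nonempty A hA
    exact mem_image.2 ⟨a, hP.subset A hA ha, (hpart A hA a ha).symm⟩
  · obtain ⟨x, hx, rfl⟩ := mem_image.1 hA
    obtain ⟨B, hB, hxB⟩ := hP.exists_mem x hx
    exact hpart B hB x hxB ▸ hB

end IsCover

namespace HACStep

variable {link : Finset α → Finset α → ℝ}

lemma card_lt (h : HACStep link P Q) : #Q < #P := by
  cases h with
  | merge A B hA hB hne _ =>
    have h2 : 2 ≤ #P := one_lt_card.2 ⟨A, hA, B, hB, hne⟩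
    have := card_insert_le (A ∪ B) ((P.erase A).erase B)
    rw [card_erase_of_mem (mem_erase.2 ⟨hne.symm, hB⟩), card_erase_of_mem hA] at this
    omega

lemma isCover (h : HACStep link P Q) (hP : IsCover X P) : IsCover X Q := by
  cases h with
  | merge A B hA hB hne _ =>
    refine ⟨fun S hS => ?_, fun S hS => ?_, fun x hx => ?_⟩
    · rcases mem_insert.1 hS with rfl | hS
      · exact union_subset (hP.subset A hA) (hP.subset B hB)
      · exact hP.subset S (mem_of_mem_erase (mem_of_mem_erase hS))
    · rcases mem_insert.1 hS with rfl | hS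
      · exact (hP.nonempty A hA).mono subset_union_left
      · exact hP.nonempty S (mem_of_mem_erase (mem_of_mem_erase hS))
    · obtain ⟨S, hS, hxS⟩ := hP.exists_mem x hx
      by_cases hSA : S = A
      · exact ⟨A ∪ B, mem_insert_self _ _, mem_union_left _ (hSA ▸ hxS)⟩
      by_cases hSB : S = B
      · exact ⟨A ∪ B, mem_insert_self _ _, mem_union_right _ (hSB ▸ hxS)⟩
      exact ⟨S, mem_insert_of_mem (mem_erase.2 ⟨hSB, mem_erase.2 ⟨hSA, hS⟩⟩), hxS⟩

end HACStep

section AverageLinkageHAC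

open Finset

variable {α : Type*} [MetricSpace α] {X : Finset α} {C : α → ℕ} {P Q : Finset (Finset α)}

lemma IsCover.eq_of_averageLink_minimal (hsep : CTree.Separable X C) (hP : IsCover X P)
    (hpure : ∀ A ∈ P, IsPure C A) (hK : #(X.image C) < #P) {A B : Finset α}
    (hA : A ∈ P) (hB : B ∈ P)
    (hmin : ∀ A' ∈ P, ∀ B' ∈ P, A' ≠ B' → averageLink A B ≤ averageLink A' B') :
    ∀ a ∈ A, ∀ b ∈ B, C a = C b := by
  obtain ⟨A₀, hA₀, B₀, hB₀, hne₀, hlabel₀⟩ := hP.exists_ne_image_eq hpure hK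
  by_contra! ⟨a, ha, b, hb, hab⟩
  refine (hmin A₀ hA₀ B₀ hB₀ hne₀).not_gt <|
    averageLink_lt_averageLink_of_forall_dist_lt (hP.nonempty A₀ hA₀) (hP.nonempty B₀ hB₀)
      (hP.nonempty A hA) (hP.nonempty B hB) fun x hx y hy x' hx' y' hy' =>
        hsep.dist_lt (hP.subset A₀ hA₀ hx) (hP.subset B₀ hB₀ hy) (hP.subset A hA hx')
          (hP.subset B hB hy') ?_ ?_
  · rw [(hpure A₀ hA₀).image_eq_singleton hx, (hpure B₀ hB₀).image_eq_singleton hy] at hlabel₀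
    exact singleton_injective hlabel₀
  · rwa [hpure A hA x' hx' a ha, hpure B hB y' hy' b hb]

lemma HACStep.isPure_averageLink (hsep : CTree.Separable X C) (h : HACStep averageLink P Q)
    (hP : IsCover X P) (hpure : ∀ A ∈ P, IsPure C A) (hK : #(X.image C) < #P) :
    ∀ A ∈ Q, IsPure C A := by
  cases h with
  | merge A B hA hB _ hmin =>
    intro S hS
    rcases mem_insert.1 hS with rfl | hS
    · exact (hpure A hA).union (hpure B hB)
        (hP.eq_of_averageLink_minimal hsep hpure hK hA hB hmin)
    · exact hpure S (mem_of_mem_erase (mem_of_mem_erase hS))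

lemma isCover_and_isPure_of_reflTransGen_averageLink [DecidableEq α]
    (hsep : CTree.Separable X C)
    (h : Relation.ReflTransGen (HACStep averageLink) (X.image singleton) P) :
    IsCover X P ∧ (#(X.image C) ≤ #P → ∀ A ∈ P, IsPure C A) := by
  induction h with
  | refl => exact ⟨isCover_image_singleton X, fun _ _ => isPure_of_mem_image_singleton⟩
  | tail _ hstep ih =>
    obtain ⟨hP, hpure⟩ := ih
    refine ⟨hstep.isCover hP, fun hK => ?_⟩
    have hK' := hK.trans_lt hstep.card_lt
    exact hstep.isPure_averageLink hsep hP (hpure hK'.le) hK'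

end AverageLinkageHAC

open CTree in
/-- under separability, hierarchical agglomerative clustering with
average linkage only merges subsets lying in a common ground-truth cluster while more
than `K` subsets remain, so every reachable partition with at least `K` subsets is
cluster-pure, and the reachable partition with exactly `K` subsets is exactly the
ground-truth clustering. -/
theorem average_linkage_recovers_ground_truth {d : ℕ} (X : Finset (Euc d))
    (C : Euc d → ℕ) (hsep : Separable X C) :
    (∀ P, Relation.ReflTransGen (HACStep (averageLink))
        (X.image fun x => ({x} : Finset (Euc d))) P →
      (X.image C).card ≤ P.card → ∀ A ∈ P, ∀ a ∈ A, ∀ b ∈ A, C a = C b) ∧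
    (∀ P, Relation.ReflTransGen (HACStep (averageLink))
        (X.image fun x => ({x} : Finset (Euc d))) P →
      P.card = (X.image C).card →
      P = X.image fun x => X.filter fun y => C y = C x) := by
  refine ⟨fun P hP hK => (isCover_and_isPure_of_reflTransGen_averageLink hsep hP).2 hK,
    fun P hP hK => ?_⟩
  obtain ⟨hcover, hpure⟩ := isCover_and_isPure_of_reflTransGen_averageLink hsep hP
  exact hcover.eq_image_filter (hpure hK.ge) hK
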